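/- arXiv:math/0611246 — 2 statements merged into one kernel-verified Lean document; each statement's English description precedes it below -/
import Mathlib

section
/- For the strip D_d = {z : 0 < Im z < d} and α ∈ (0,d), the regular part of the Green's function on the diagonal is γ(αi) = (1/2π) log(2 sin(απ/d)/(π/d)). In particular γ(αi) ≤ (1/2π) log(2d/π) for all α ∈ (0,d). -/
/-
Both numerator and denominator of the ratio defining `G` are entire functions of `z`; the
denominator `exp(πz/d) - exp(iθ)`, `θ = απ/d`, has a simple zero at the pole `αi` with derivative
`exp(iθ) π/d`, while the numerator takes the value `exp(iθ) - exp(-iθ) = 2i sin θ` there. Hence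
`(z - αi) · num/den → 2i sin θ / (exp(iθ) π/d)`, whose modulus is `2 sin θ/(π/d)`, and taking
logarithms gives the regular part. The bound follows from `sin θ ≤ 1`.
-/
open Real Filter Topology
noncomputable section

/-- The Laplacian of a function `f : ℂ → ℝ` (identifying ℂ with ℝ²). -/
def lapC (f : ℂ → ℝ) (z : ℂ) : ℝ :=
  iteratedFDeriv ℝ 2 f z ![1, 1] + iteratedFDeriv ℝ 2 f z ![Complex.I, Complex.I]

section SimpleZero

variable {𝕜 : Type*} [NontriviallyNormedField 𝕜] {f g : 𝕜 → 𝕜} {f' c : 𝕜}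

theorem tendsto_mul_sub_div_of_hasDerivAt (hf : HasDerivAt f f' c) (hfc : f c = 0)
    (hf' : f' ≠ 0) (hg : ContinuousAt g c) :
    Tendsto (fun z => g z * (z - c) / f z) (𝓝[≠] c) (𝓝 (g c / f')) := by
  have hslope : Tendsto (fun z => f z / (z - c)) (𝓝[≠] c) (𝓝 f') := by
    have hslope_eq : slope f c = fun z => f z / (z - c) :=
      funext fun z => by rw [slope_def_field, hfc, sub_zero]
    exact hslope_eq ▸ hasDerivAt_iff_tendsto_slope.mp hf
  have hinv : Tendsto (fun z => (z - c) / f z) (𝓝[≠] c) (𝓝 f'⁻¹) := by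
    simpa only [inv_div] using hslope.inv₀ hf'
  simpa only [mul_div_assoc, div_eq_mul_inv (g c)] using
    (hg.tendsto.mono_left nhdsWithin_le_nhds).mul hinv

theorem tendsto_log_norm_div_sub_log_one_div_norm_sub (hf : HasDerivAt f f' c)
    (hfc : f c = 0) (hf' : f' ≠ 0) (hg : ContinuousAt g c) (hgc : g c ≠ 0) :
    Tendsto (fun z => Real.log ‖g z / f z‖ - Real.log (1 / ‖z - c‖)) (𝓝[≠] c)
      (𝓝 (Real.log ‖g c / f'‖)) := by
  have hlim := tendsto_mul_sub_div_of_hasDerivAt hf hfc hf' hg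
  have hL : g c / f' ≠ 0 := div_ne_zero hgc hf'
  have hlog : Tendsto (fun z => Real.log ‖g z * (z - c) / f z‖) (𝓝[≠] c)
      (𝓝 (Real.log ‖g c / f'‖)) :=
    ((Real.continuousAt_log (norm_ne_zero_iff.mpr hL)).tendsto.comp
      (continuous_norm.tendsto _)).comp hlim
  refine hlog.congr' ?_
  filter_upwards [hlim.eventually_ne hL] with z hz
  rw [mul_div_right_comm] at hz ⊢
  obtain ⟨hq, hzc⟩ := mul_ne_zero_iff.mp hz
  rw [norm_mul, Real.log_mul (norm_ne_zero_iff.mpr hq) (norm_ne_zero_iff.mpr hzc), one_div,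
    Real.log_inv, sub_neg_eq_add]

end SimpleZero

theorem Complex.norm_exp_mul_I_sub_exp_neg_mul_I (θ : ℝ) :
    ‖Complex.exp (θ * Complex.I) - Complex.exp (-(θ * Complex.I))‖ = 2 * |Real.sin θ| := by
  rw [← Complex.two_sinh, Complex.sinh_mul_I, ← Complex.ofReal_sin, norm_mul, norm_mul,
    Complex.norm_I, Complex.norm_real, Real.norm_eq_abs, Complex.norm_two, mul_one]

theorem Complex.norm_exp_mul_I_sub_exp_neg_mul_I_div (θ : ℝ) (k : ℂ) :
    ‖(Complex.exp (θ * Complex.I) - Complex.exp (-(θ * Complex.I))) /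
      (Complex.exp (θ * Complex.I) * k)‖ = 2 * |Real.sin θ| / ‖k‖ := by
  rw [norm_div, norm_mul, Complex.norm_exp_mul_I_sub_exp_neg_mul_I, Complex.norm_exp_ofReal_mul_I,
    one_mul]

theorem hasDerivAt_cexp_mul_div_sub (a d w c : ℂ) :
    HasDerivAt (fun z => Complex.exp (a * z / d) - w) (Complex.exp (a * c / d) * (a / d)) c := by
  simpa only [mul_one] using (((hasDerivAt_id' c).const_mul a).div_const d).cexp.sub_const w

/-- The diagonal regular part of the Green function of the strip `D_d` at the pole `αi`
equals `(1/2π) log (2 sin(απ/d)/(π/d))`, which is at most `(1/2π) log (2d/π)`. -/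
theorem strip_regular_part (d α : ℝ) (hd : 0 < d) (hα : α ∈ Set.Ioo 0 d)
    (G : ℂ → ℝ)
    (hG : ∀ z : ℂ, G z = (1/(2*π)) * Real.log (‖
      ((Complex.exp ((π : ℂ) * z / (d : ℂ)) - Complex.exp (-((α : ℂ) * (π : ℂ) * Complex.I / (d : ℂ)))) /
       (Complex.exp ((π : ℂ) * z / (d : ℂ)) - Complex.exp ((α : ℂ) * (π : ℂ) * Complex.I / (d : ℂ))))‖)) :
    Tendsto (fun z => G z - (1/(2*π)) * Real.log (1 / ‖z - (α : ℂ) * Complex.I‖))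
      (nhdsWithin ((α : ℂ) * Complex.I) {(α : ℂ) * Complex.I}ᶜ)
      (nhds ((1/(2*π)) * Real.log (2 * Real.sin (α * π / d) / (π / d)))) ∧
    (1/(2*π)) * Real.log (2 * Real.sin (α * π / d) / (π / d)) ≤ (1/(2*π)) * Real.log (2*d/π) := by
  obtain ⟨hα0, hαd⟩ := hα
  set θ : ℝ := α * π / d
  have hsin : 0 < sin θ :=
    Real.sin_pos_of_pos_of_lt_pi (by positivity) (by rw [div_lt_iff₀ hd]; nlinarith [pi_pos])
  have hpole : (π : ℂ) * (α * Complex.I) / d = θ * Complex.I := by simp only [θ]; push_cast; ring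
  have hconst : (α : ℂ) * π * Complex.I / d = θ * Complex.I := by simp only [θ]; push_cast; ring
  have hden := hasDerivAt_cexp_mul_div_sub π d (Complex.exp (θ * Complex.I)) (α * Complex.I)
  rw [hpole] at hden
  have hval : ‖(Complex.exp (θ * Complex.I) - Complex.exp (-(θ * Complex.I))) /
      (Complex.exp (θ * Complex.I) * (π / d))‖ = 2 * sin θ / (π / d) := by
    rw [Complex.norm_exp_mul_I_sub_exp_neg_mul_I_div, abs_of_pos hsin, ← Complex.ofReal_div,
      Complex.norm_real, Real.norm_of_nonneg (by positivity)]
  have hlim := tendsto_log_norm_div_sub_log_one_div_norm_sub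
    (g := fun z => Complex.exp (π * z / d) - Complex.exp (-(θ * Complex.I))) hden
    (by simp [hpole]) (mul_ne_zero (Complex.exp_ne_zero _) (by exact_mod_cast (div_pos pi_pos hd).ne'))
    (by fun_prop) (by
      rw [hpole, ← norm_ne_zero_iff, Complex.norm_exp_mul_I_sub_exp_neg_mul_I]
      exact mul_ne_zero two_ne_zero (abs_ne_zero.mpr hsin.ne'))
  rw [hpole, hval] at hlim
  refine ⟨?_, ?_⟩
  · convert hlim.const_mul (1 / (2 * π)) using 2 with z
    rw [hG, hconst, mul_sub]
  · rw [show 2 * d / π = 2 * 1 / (π / d) by field_simp]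
    gcongr
    exact sin_le_one θ
end
end

section
/- Let Ω ⊂ ℝ² be a bounded domain contained in a strip of width d. Then γ(Ω) := sup_{z∈Ω} γ_Ω(z) ≤ (1/2π) log(2d/π), where γ_Ω(z) is the diagonal regular part of the Dirichlet Green's function of Ω. -/
open MeasureTheory Real Filter Topology
noncomputable section

/-- Points of the plane. -/
abbrev Pt : Type := EuclideanSpace ℝ (Fin 2)

/-- The Laplacian of a function `f : ℝ² → ℝ`. -/
def lap (f : Pt → ℝ) (x : Pt) : ℝ :=
  ∑ i : Fin 2, iteratedFDeriv ℝ 2 f x ![EuclideanSpace.single i 1, EuclideanSpace.single i 1]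

/-- A bounded domain (open, connected) in the plane with smooth boundary. -/
def SmoothDomain (Ω : Set Pt) : Prop :=
  IsOpen Ω ∧ IsConnected Ω ∧ Bornology.IsBounded Ω ∧
  ∃ f : Pt → ℝ, ContDiff ℝ (⊤ : ℕ∞) f ∧ Ω = {x | f x < 0} ∧ ∀ x ∈ frontier Ω, fderiv ℝ f x ≠ 0

section Helpers

/-- Second derivative test: at an interior local max of a C² function, g'' ≤ 0. -/
lemma second_deriv_nonpos_of_isLocalMax {g : ℝ → ℝ} (hg : ContDiffAt ℝ 2 g 0)
    (hmax : IsLocalMax g 0) : deriv (deriv g) 0 ≤ 0 := by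
  by_contra hK
  push_neg at hK
  have h1 : ContDiffAt ℝ 1 (fderiv ℝ g) 0 := hg.fderiv_right (by norm_num)
  have hdg : deriv g = fun x => fderiv ℝ g x 1 := by
    funext x; rw [fderiv_apply_one_eq_deriv]
  have hd2 : DifferentiableAt ℝ (deriv g) 0 := by
    rw [hdg]
    exact (ContinuousLinearMap.apply ℝ ℝ (1:ℝ)).differentiable.differentiableAt.comp 0
      (h1.differentiableAt (by norm_num))
  have hder : HasDerivAt (deriv g) (deriv (deriv g) 0) 0 := hd2.hasDerivAt
  have hzero : deriv g 0 = 0 := hmax.deriv_eq_zero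
  have hslope : Tendsto (slope (deriv g) 0) (𝓝[≠] (0:ℝ)) (𝓝 (deriv (deriv g) 0)) :=
    hasDerivAt_iff_tendsto_slope.mp hder
  have hpos : ∀ᶠ s in 𝓝[≠] (0:ℝ), 0 < slope (deriv g) 0 s :=
    hslope.eventually (eventually_gt_nhds hK)
  have hposr : ∀ᶠ s in 𝓝[>] (0:ℝ), 0 < deriv g s := by
    have h := hpos.filter_mono (nhdsWithin_mono 0 (fun s hs => ne_of_gt hs))
    filter_upwards [h, self_mem_nhdsWithin] with s hs hs'
    have hss : (0:ℝ) < s := hs'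
    have heq : slope (deriv g) 0 s = deriv g s / s := by
      simp [slope_def_field, hzero]
    rw [heq] at hs
    have := mul_pos hs hss
    rwa [div_mul_cancel₀ _ (ne_of_gt hss)] at this
  obtain ⟨δ₁, hδ₁, hIoo⟩ : ∃ u ∈ Set.Ioi (0:ℝ), Set.Ioo 0 u ⊆ {s | 0 < deriv g s} :=
    mem_nhdsGT_iff_exists_Ioo_subset.mp hposr
  have hδ₁' : (0:ℝ) < δ₁ := hδ₁
  have hcont : ∀ᶠ s in 𝓝 (0:ℝ), ContinuousAt g s :=
    (hg.eventually (by norm_num)).mono (fun s hs => hs.continuousAt)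
  obtain ⟨δ₂, hδ₂, hc⟩ := Metric.eventually_nhds_iff.mp hcont
  obtain ⟨δ₃, hδ₃, hm⟩ := Metric.eventually_nhds_iff.mp (hmax : ∀ᶠ s in 𝓝 (0:ℝ), g s ≤ g 0)
  set δ : ℝ := min (min δ₁ δ₂) δ₃ / 2 with hδdef
  have hδpos : 0 < δ := by positivity
  have l1 := min_le_left (min δ₁ δ₂) δ₃
  have l2 := min_le_left δ₁ δ₂
  have l3 := min_le_right δ₁ δ₂
  have l4 := min_le_right (min δ₁ δ₂) δ₃
  have hδlt1 : δ < δ₁ := by dsimp [δ]; linarith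
  have hδlt2 : δ < δ₂ := by dsimp [δ]; linarith
  have hδlt3 : δ < δ₃ := by dsimp [δ]; linarith
  have hmono : StrictMonoOn g (Set.Icc 0 δ) := by
    apply strictMonoOn_of_deriv_pos (convex_Icc 0 δ)
    · intro s hs
      rcases hs with ⟨h0, h1'⟩
      have hds : dist s 0 < δ₂ := by
        rw [Real.dist_eq, sub_zero, abs_of_nonneg h0]; linarith
      exact (hc hds).continuousWithinAt
    · intro s hs
      rw [interior_Icc] at hs
      exact hIoo ⟨hs.1, lt_trans hs.2 hδlt1⟩
  have hcontr : g 0 < g δ := hmono (Set.left_mem_Icc.mpr hδpos.le)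
    (Set.right_mem_Icc.mpr hδpos.le) hδpos
  have : g δ ≤ g 0 := by
    have hds : dist δ 0 < δ₃ := by
      rw [Real.dist_eq, sub_zero, abs_of_pos hδpos]; exact hδlt3
    exact hm hds
  linarith

end Helpers

lemma hasDerivAt_line {E : Type*} [NormedAddCommGroup E] [NormedSpace ℝ E] (p v : E) (t : ℝ) :
    HasDerivAt (fun s : ℝ => p + s • v) v t := by
  simpa using ((hasDerivAt_id t).smul_const v).const_add p

/-- Second directional derivative via restriction to a line. -/
lemma iteratedFDeriv_two_line {E : Type*} [NormedAddCommGroup E] [NormedSpace ℝ E]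
    {f : E → ℝ} {p : E} (v : E) (hf : ContDiffAt ℝ 2 f p) :
    iteratedFDeriv ℝ 2 f p ![v, v] = deriv (deriv (fun t : ℝ => f (p + t • v))) 0 := by
  have hev : ∀ᶠ q in 𝓝 p, DifferentiableAt ℝ f q :=
    (hf.eventually (by norm_num)).mono fun q hq => hq.differentiableAt (by norm_num)
  have hc : Tendsto (fun t : ℝ => p + t • v) (𝓝 0) (𝓝 p) := by
    simpa using (hasDerivAt_line p v 0).continuousAt.tendsto
  have hevt : ∀ᶠ t in 𝓝 (0:ℝ), DifferentiableAt ℝ f (p + t • v) := hc.eventually hev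
  have hd1 : deriv (fun t : ℝ => f (p + t • v)) =ᶠ[𝓝 (0:ℝ)]
      fun t => fderiv ℝ f (p + t • v) v := by
    filter_upwards [hevt] with t ht
    exact (ht.hasFDerivAt.comp_hasDerivAt t (hasDerivAt_line p v t)).deriv
  rw [hd1.deriv_eq]
  have hBd : HasFDerivAt (fderiv ℝ f) (fderiv ℝ (fderiv ℝ f) p) p :=
    ((hf.fderiv_right (m := 1) (le_refl _)).differentiableAt (by norm_num)).hasFDerivAt
  have h0 : p + (0:ℝ) • v = p := by simp
  rw [← h0] at hBd
  have hcomp : HasDerivAt (fun t : ℝ => fderiv ℝ f (p + t • v))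
      (fderiv ℝ (fderiv ℝ f) (p + (0:ℝ) • v) v) 0 :=
    hBd.comp_hasDerivAt 0 (hasDerivAt_line p v 0)
  rw [h0] at hcomp
  have happ : HasDerivAt (fun t : ℝ => fderiv ℝ f (p + t • v) v)
      (fderiv ℝ (fderiv ℝ f) p v v) 0 :=
    (ContinuousLinearMap.apply ℝ ℝ v).hasFDerivAt.comp_hasDerivAt 0 hcomp
  rw [happ.deriv, iteratedFDeriv_two_apply]
  simp

lemma hasDerivAt_re_comp {H : ℂ → ℂ} {ζ a : ℂ} {t : ℝ} (hH : DifferentiableAt ℂ H (ζ + t • a)) :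
    HasDerivAt (fun s : ℝ => (H (ζ + s • a)).re) ((a * deriv H (ζ + t • a)).re) t := by
  have hline : HasDerivAt (fun s : ℝ => ζ + s • a) a t := hasDerivAt_line ζ a t
  have hc : HasDerivAt H (deriv H (ζ + t • a)) (ζ + t • a) := hH.hasDerivAt
  have hcomp : HasDerivAt (fun s : ℝ => H (ζ + s • a)) (a • deriv H (ζ + t • a)) t :=
    hc.scomp t hline
  have := Complex.reCLM.hasFDerivAt.comp_hasDerivAt t hcomp
  simpa [smul_eq_mul, Function.comp_def] using this

lemma line_deriv2 {F : ℂ → ℂ} {s : Set ℂ} (hs : IsOpen s) (hF : DifferentiableOn ℂ F s)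
    {ζ : ℂ} (hζ : ζ ∈ s) (a : ℂ) :
    deriv (deriv (fun t : ℝ => (F (ζ + t • a)).re)) 0 = (a * (a * deriv (deriv F) ζ)).re := by
  have hF' : DifferentiableOn ℂ (deriv F) s := ((hF.analyticOnNhd hs).deriv).differentiableOn
  have hmem : ∀ᶠ t : ℝ in 𝓝 (0:ℝ), ζ + t • a ∈ s := by
    have hct : Tendsto (fun t : ℝ => ζ + t • a) (𝓝 0) (𝓝 ζ) := by
      simpa using (hasDerivAt_line ζ a 0).continuousAt.tendsto
    exact hct.eventually (hs.eventually_mem hζ)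
  have hd1 : deriv (fun t : ℝ => (F (ζ + t • a)).re) =ᶠ[𝓝 (0:ℝ)]
      fun t => ((fun w => a * deriv F w) (ζ + t • a)).re := by
    filter_upwards [hmem] with t ht
    exact (hasDerivAt_re_comp (hF.differentiableAt (hs.mem_nhds ht))).deriv
  rw [hd1.deriv_eq]
  have h0 : ζ + (0:ℝ) • a = ζ := by simp
  have h2 : DifferentiableAt ℂ (fun w => a * deriv F w) (ζ + (0:ℝ) • a) := by
    rw [h0]; exact (hF'.differentiableAt (hs.mem_nhds hζ)).const_mul a
  rw [(hasDerivAt_re_comp h2).deriv]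
  congr 1
  rw [h0, deriv_const_mul _ (hF'.differentiableAt (hs.mem_nhds hζ))]

lemma lap_re_holo (L : Pt →L[ℝ] ℂ)
    (hL : (L (EuclideanSpace.single 0 1))^2 + (L (EuclideanSpace.single 1 1))^2 = 0)
    {F : ℂ → ℂ} {s : Set ℂ} (hs : IsOpen s) (hF : DifferentiableOn ℂ F s)
    {p : Pt} (hp : L p ∈ s) :
    ContDiffAt ℝ 2 (fun q => (F (L q)).re) p ∧ lap (fun q => (F (L q)).re) p = 0 := by
  have hFC : ContDiffOn ℂ 2 F s := hF.contDiffOn hs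
  have hC : ContDiffAt ℝ 2 (fun q => (F (L q)).re) p := by
    have h1 : ContDiffAt ℂ 2 F (L p) := hFC.contDiffAt (hs.mem_nhds hp)
    have h2 : ContDiffAt ℝ 2 F (L p) := h1.restrict_scalars ℝ
    have h3 : ContDiffAt ℝ 2 (fun q => F (L q)) p := h2.comp p L.contDiff.contDiffAt
    exact Complex.reCLM.contDiff.contDiffAt.comp p h3
  refine ⟨hC, ?_⟩
  unfold lap
  rw [Fin.sum_univ_two]
  have key : ∀ i : Fin 2, iteratedFDeriv ℝ 2 (fun q => (F (L q)).re) p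
      ![EuclideanSpace.single i 1, EuclideanSpace.single i 1]
      = ((L (EuclideanSpace.single i 1)) *
        ((L (EuclideanSpace.single i 1)) * deriv (deriv F) (L p))).re := by
    intro i
    rw [iteratedFDeriv_two_line _ hC]
    have heq : (fun t : ℝ => (fun q => (F (L q)).re) (p + t • EuclideanSpace.single i 1))
        = fun t : ℝ => (F (L p + t • L (EuclideanSpace.single i 1))).re := by
      funext t; simp [_root_.map_add, _root_.map_smul]
    rw [heq, line_deriv2 hs hF hp]
  rw [key 0, key 1, ← Complex.add_re]
  have hring : (L (EuclideanSpace.single 0 1)) *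
        ((L (EuclideanSpace.single 0 1)) * deriv (deriv F) (L p))
      + (L (EuclideanSpace.single 1 1)) *
        ((L (EuclideanSpace.single 1 1)) * deriv (deriv F) (L p))
      = ((L (EuclideanSpace.single 0 1))^2 + (L (EuclideanSpace.single 1 1))^2)
        * deriv (deriv F) (L p) := by ring
  rw [hring, hL, zero_mul, Complex.zero_re]

lemma lap_comb {U : Set Pt} (hU : IsOpen U) {f g : Pt → ℝ} {p : Pt} (hp : p ∈ U)
    (hf : ContDiffOn ℝ 2 f U) (hg : ContDiffOn ℝ 2 g U) (a b : ℝ) :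
    lap (fun y => a * f y + b * g y) p = a * lap f p + b * lap g p := by
  have hf' : ContDiffOn ℝ 2 (fun y => a * f y) U := by
    simpa [smul_eq_mul] using hf.const_smul a
  have hg' : ContDiffOn ℝ 2 (fun y => b * g y) U := by
    simpa [smul_eq_mul] using hg.const_smul b
  have hsmul : ∀ (h : Pt → ℝ), ContDiffOn ℝ 2 h U → ∀ c : ℝ,
      iteratedFDerivWithin ℝ 2 (fun y => c * h y) U p
        = c • iteratedFDerivWithin ℝ 2 h U p := by
    intro h hh c
    have hch : (fun y => c * h y) = c • h := by funext y; simp [smul_eq_mul]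
    rw [hch]
    exact iteratedFDerivWithin_const_smul_apply (hh p hp) hU.uniqueDiffOn hp
  have key : iteratedFDerivWithin ℝ 2 (fun y => a * f y + b * g y) U p
      = a • iteratedFDerivWithin ℝ 2 f U p + b • iteratedFDerivWithin ℝ 2 g U p := by
    rw [iteratedFDerivWithin_add_apply' (hf' p hp) (hg' p hp) hU.uniqueDiffOn hp,
      hsmul f hf a, hsmul g hg b]
  have hone : ∀ m, iteratedFDeriv ℝ 2 (fun y => a * f y + b * g y) p m
      = a * iteratedFDeriv ℝ 2 f p m + b * iteratedFDeriv ℝ 2 g p m := by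
    intro m
    have e1 := (iteratedFDerivWithin_of_isOpen (𝕜 := ℝ)
      (f := fun y => a * f y + b * g y) 2 hU hp).symm
    have e2 := iteratedFDerivWithin_of_isOpen (𝕜 := ℝ) (f := f) 2 hU hp
    have e3 := iteratedFDerivWithin_of_isOpen (𝕜 := ℝ) (f := g) 2 hU hp
    rw [e1, key, ← e2, ← e3]
    simp [smul_eq_mul]
  unfold lap
  simp only [hone]
  rw [Finset.sum_add_distrib, ← Finset.mul_sum, ← Finset.mul_sum]

lemma lap_norm_sq (m : Pt) : lap (fun q : Pt => ‖q‖^2) m = 4 := by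
  have h : ∀ i : Fin 2, iteratedFDeriv ℝ 2 (fun q : Pt => ‖q‖^2) m
      ![EuclideanSpace.single i 1, EuclideanSpace.single i 1] = 2 := by
    intro i
    rw [iteratedFDeriv_two_line _ (contDiff_norm_sq ℝ).contDiffAt]
    set e : Pt := EuclideanSpace.single i 1 with he
    set c : ℝ := 2 * (inner ℝ m e : ℝ) with hcd
    have hexp : (fun t : ℝ => ‖m + t • e‖^2)
        = fun t : ℝ => t^2 + c * t + ‖m‖^2 := by
      funext t
      rw [norm_add_sq_real, real_inner_smul_right, norm_smul]
      have hne : ‖e‖ = 1 := by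
        rw [he, EuclideanSpace.norm_single]; norm_num
      rw [hne]
      simp only [norm_eq_abs, mul_one]
      rw [sq_abs]
      ring
    rw [hexp]
    have hD1 : ∀ t : ℝ, HasDerivAt (fun s : ℝ => s^2 + c * s + ‖m‖^2) (2*t + c) t := by
      intro t
      have := ((hasDerivAt_pow 2 t).add ((hasDerivAt_id t).const_mul c)).add_const (‖m‖^2)
      simpa using this
    have e1 : deriv (fun s : ℝ => s^2 + c * s + ‖m‖^2) = fun t => 2*t + c :=
      funext fun t => (hD1 t).deriv
    rw [e1]
    have hD2 : HasDerivAt (fun t : ℝ => 2*t + c) 2 0 := by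
      simpa using ((hasDerivAt_id (0:ℝ)).const_mul 2).add_const c
    rw [hD2.deriv]
  unfold lap
  rw [Fin.sum_univ_two, h 0, h 1]
  norm_num

lemma max_principle {U : Set Pt} (hUo : IsOpen U) (hUb : Bornology.IsBounded U)
    {u : Pt → ℝ} (hc : ContinuousOn u (closure U))
    (hsm : ∀ p ∈ U, ContDiffAt ℝ 2 u p)
    (hlap : ∀ p ∈ U, lap u p = 0)
    (hfr : ∀ p ∈ frontier U, u p ≤ 0) :
    ∀ p ∈ U, u p ≤ 0 := by
  intro p hp
  have hKc : IsCompact (closure U) := hUb.isCompact_closure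
  obtain ⟨R, hR⟩ : ∃ R, ∀ q ∈ closure U, ‖q‖ ≤ R :=
    isBounded_iff_forall_norm_le.mp hUb.closure
  have hqsm : ContDiff ℝ 2 (fun q : Pt => ‖q‖^2) := contDiff_norm_sq ℝ
  have main : ∀ ε > 0, u p ≤ ε * (R^2 + 1) := by
    intro ε hε
    set w : Pt → ℝ := fun q => u q + ε * ‖q‖^2 with hw
    have hwc : ContinuousOn w (closure U) :=
      hc.add (continuousOn_const.mul hqsm.continuous.continuousOn)
    obtain ⟨m, hm, hmax⟩ := hKc.exists_isMaxOn ⟨p, subset_closure hp⟩ hwc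
    by_cases hmU : m ∈ U
    · exfalso
      have hCm : ContDiffAt ℝ 2 w m :=
        (hsm m hmU).add (contDiffAt_const.mul hqsm.contDiffAt)
      have hlocal : IsLocalMax w m :=
        hmax.isLocalMax (mem_of_superset (hUo.mem_nhds hmU) subset_closure)
      have hdir : ∀ i : Fin 2, iteratedFDeriv ℝ 2 w m
          ![EuclideanSpace.single i 1, EuclideanSpace.single i 1] ≤ 0 := by
        intro i
        set e : Pt := EuclideanSpace.single i 1 with he
        rw [iteratedFDeriv_two_line _ hCm]
        have hline : ContDiffAt ℝ 2 (fun t : ℝ => m + t • e) 0 :=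
          (contDiff_const.add (contDiff_id.smul contDiff_const)).contDiffAt
        have h0 : m + (0:ℝ) • e = m := by simp
        apply second_deriv_nonpos_of_isLocalMax
        · exact ContDiffAt.comp 0 (by rw [h0] at *; exact hCm) hline
        · have := IsLocalMax.comp_continuous (f := w) (g := fun t : ℝ => m + t • e)
            (b := (0:ℝ)) (by simpa using hlocal) hline.continuousAt
          exact this
      have hlapw : lap w m = 4 * ε := by
        have hwe : w = fun y => 1 * u y + ε * ‖y‖^2 := by funext y; simp [hw]
        rw [hwe, lap_comb hUo hmU (fun q hq => (hsm q hq).contDiffWithinAt)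
          (hqsm.contDiffOn) 1 ε, hlap m hmU, lap_norm_sq]
        ring
      have hsum : lap w m ≤ 0 := by
        unfold lap
        rw [Fin.sum_univ_two]
        have := hdir 0
        have := hdir 1
        linarith [hdir 0, hdir 1]
      rw [hlapw] at hsum
      linarith
    · have hmf : m ∈ frontier U := by
        rw [hUo.frontier_eq]; exact ⟨hm, hmU⟩
      have h1 : w p ≤ w m := hmax (subset_closure hp)
      have h2 : u m ≤ 0 := hfr m hmf
      have h3 : ‖m‖^2 ≤ R^2 := by
        have := hR m hm
        nlinarith [norm_nonneg m]
      have h4 : 0 ≤ ε * ‖p‖^2 := by positivity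
      simp only [hw] at h1
      nlinarith
  by_contra hcon
  push_neg at hcon
  have hpos : (0:ℝ) < R^2 + 1 := by positivity
  have hε : (0:ℝ) < u p / (2 * (R^2+1)) := by positivity
  have := main _ hε
  have heq : u p / (2 * (R^2+1)) * (R^2+1) = u p / 2 := by field_simp
  rw [heq] at this
  linarith

namespace SGF

/-- Conformal map from the strip `t < Re ζ < t + d` to the upper half plane. -/
def φ (d t : ℝ) (ζ : ℂ) : ℂ := Complex.exp ((↑(π/d)) * Complex.I * (ζ - ↑t))

lemma φ_arg_re (d t : ℝ) (ζ : ℂ) : ((↑(π/d)) * Complex.I * (ζ - ↑t)).re = -(π/d) * ζ.im := by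
  simp [Complex.mul_re, Complex.mul_im]

lemma φ_arg_im (d t : ℝ) (ζ : ℂ) : ((↑(π/d)) * Complex.I * (ζ - ↑t)).im = (π/d) * (ζ.re - t) := by
  simp [Complex.mul_re, Complex.mul_im]

lemma φ_im (d t : ℝ) (ζ : ℂ) :
    (φ d t ζ).im = Real.exp (-(π/d) * ζ.im) * Real.sin ((π/d) * (ζ.re - t)) := by
  unfold φ
  rw [Complex.exp_im, φ_arg_re, φ_arg_im]

lemma φ_im_nonneg {d t : ℝ} (hd : 0 < d) {ζ : ℂ} (h1 : t ≤ ζ.re) (h2 : ζ.re ≤ t + d) :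
    0 ≤ (φ d t ζ).im := by
  rw [φ_im]
  apply mul_nonneg (Real.exp_nonneg _)
  apply Real.sin_nonneg_of_nonneg_of_le_pi
  · have : 0 < π/d := by positivity
    nlinarith
  · have h3 : (π/d) * (ζ.re - t) ≤ (π/d) * d := by
      apply mul_le_mul_of_nonneg_left (by linarith) (by positivity)
    calc (π/d) * (ζ.re - t) ≤ (π/d) * d := h3
    _ = π := by field_simp

lemma φ_im_pos {d t : ℝ} (hd : 0 < d) {ζ : ℂ} (h1 : t < ζ.re) (h2 : ζ.re < t + d) :
    0 < (φ d t ζ).im := by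
  rw [φ_im]
  apply mul_pos (Real.exp_pos _)
  apply Real.sin_pos_of_pos_of_lt_pi
  · have : 0 < π/d := by positivity
    nlinarith
  · have h3 : (π/d) * (ζ.re - t) < (π/d) * d := by
      apply mul_lt_mul_of_pos_left (by linarith) (by positivity)
    calc (π/d) * (ζ.re - t) < (π/d) * d := h3
    _ = π := by field_simp

lemma φ_hasDeriv (d t : ℝ) (ζ : ℂ) :
    HasDerivAt (φ d t) ((↑(π/d)) * Complex.I * φ d t ζ) ζ := by
  have h1 : HasDerivAt (fun ζ : ℂ => (↑(π/d)) * Complex.I * (ζ - ↑t))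
      ((↑(π/d)) * Complex.I) ζ := by
    simpa using ((hasDerivAt_id ζ).sub_const (↑t:ℂ)).const_mul ((↑(π/d:ℝ)) * Complex.I)
  have h2 := h1.cexp
  unfold φ
  refine h2.congr_deriv ?_
  ring

lemma φ_inj {d t : ℝ} (hd : 0 < d) {ζ z : ℂ} (h1 : t ≤ ζ.re) (h2 : ζ.re ≤ t + d)
    (h3 : t < z.re) (h4 : z.re < t + d) (h : φ d t ζ = φ d t z) : ζ = z := by
  unfold φ at h
  obtain ⟨n, hn⟩ := Complex.exp_eq_exp_iff_exists_int.mp h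
  have hre := congrArg Complex.re hn
  have him := congrArg Complex.im hn
  rw [Complex.add_re, φ_arg_re, φ_arg_re] at hre
  rw [Complex.add_im, φ_arg_im, φ_arg_im] at him
  have hnre : ((n:ℂ) * (2 * ↑π * Complex.I)).re = 0 := by
    simp [Complex.mul_re]
  have hnim : ((n:ℂ) * (2 * ↑π * Complex.I)).im = n * (2 * π) := by
    simp [Complex.mul_im]
  rw [hnre] at hre
  rw [hnim] at him
  have hπd : 0 < π/d := by positivity
  -- from him : (π/d)(ζ.re - t) = (π/d)(z.re - t) + n * 2π
  have hπ : π ≠ 0 := ne_of_gt Real.pi_pos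
  have hπd' : (π/d) ≠ 0 := ne_of_gt hπd
  have hcast : ζ.re - z.re = 2 * d * (n:ℝ) := by
    apply mul_left_cancel₀ hπd'
    have hdd : (π/d) * (2 * d * (n:ℝ)) = (n:ℝ) * (2 * π) := by
      field_simp
    rw [hdd]; linarith
  have hn0 : (n:ℝ) = 0 := by
    have b1 : ζ.re - z.re < d := by linarith
    have b2 : -d < ζ.re - z.re := by linarith
    rw [hcast] at b1 b2
    have hb1 : (n:ℝ) < 1 := by nlinarith
    have hb2 : (-1:ℝ) < (n:ℝ) := by nlinarith
    have hb1' : n < 1 := by exact_mod_cast hb1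
    have hb2' : -1 < n := by exact_mod_cast hb2
    have : n = 0 := by omega
    exact_mod_cast this
  apply Complex.ext
  · rw [hn0] at hcast; linarith
  · apply mul_left_cancel₀ (neg_ne_zero.mpr hπd')
    linarith

def ψ (d t : ℝ) (z : ℂ) (ζ : ℂ) : ℂ :=
  (φ d t ζ - φ d t z) / (φ d t ζ - starRingEnd ℂ (φ d t z))

def Dset (d t : ℝ) (z : ℂ) : Set ℂ := {ζ | φ d t ζ - starRingEnd ℂ (φ d t z) ≠ 0}

lemma φ_continuous (d t : ℝ) : Continuous (φ d t) := by
  unfold φ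
  exact Complex.continuous_exp.comp (by continuity)

lemma φ_differentiable (d t : ℝ) : Differentiable ℂ (φ d t) :=
  fun ζ => (φ_hasDeriv d t ζ).differentiableAt

lemma Dset_open (d t : ℝ) (z : ℂ) : IsOpen (Dset d t z) := by
  have : Dset d t z = (fun ζ => φ d t ζ - starRingEnd ℂ (φ d t z)) ⁻¹' {0}ᶜ := by
    ext ζ; simp [Dset]
  rw [this]
  exact isOpen_compl_singleton.preimage ((φ_continuous d t).sub continuous_const)

section Strip
variable {d t : ℝ} {z : ℂ} (hd : 0 < d) (hz1 : t < z.re) (hz2 : z.re < t + d)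

include hd hz1 hz2

lemma mem_Dset {ζ : ℂ} (h : 0 ≤ (φ d t ζ).im) : ζ ∈ Dset d t z := by
  have haim : 0 < (φ d t z).im := φ_im_pos hd hz1 hz2
  intro hc
  rw [sub_eq_zero] at hc
  have := congrArg Complex.im hc
  rw [Complex.conj_im] at this
  linarith

lemma ψ_ne_zero {ζ : ℂ} (h1 : t ≤ ζ.re) (h2 : ζ.re ≤ t + d) (hne : ζ ≠ z) :
    ψ d t z ζ ≠ 0 := by
  apply div_ne_zero
  · rw [sub_ne_zero]
    exact fun h => hne (φ_inj hd h1 h2 hz1 hz2 h)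
  · exact mem_Dset hd hz1 hz2 (φ_im_nonneg hd h1 h2)

lemma ψ_self : ψ d t z z = 0 := by
  unfold ψ; rw [sub_self, zero_div]

lemma ψ_abs_le_one {ζ : ℂ} (h : 0 ≤ (φ d t ζ).im) : ‖ψ d t z ζ‖ ≤ 1 := by
  have haim : 0 < (φ d t z).im := φ_im_pos hd hz1 hz2
  unfold ψ
  rw [norm_div]
  have hden : φ d t ζ - starRingEnd ℂ (φ d t z) ≠ 0 := mem_Dset hd hz1 hz2 h
  apply div_le_one_of_le₀

  · have hsq : Complex.normSq (φ d t ζ - φ d t z)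
        ≤ Complex.normSq (φ d t ζ - starRingEnd ℂ (φ d t z)) := by
      simp only [Complex.normSq_apply, Complex.sub_re, Complex.sub_im,
        Complex.conj_re, Complex.conj_im]
      nlinarith [mul_nonneg h haim.le]
    rw [Complex.norm_def, Complex.norm_def]
    exact Real.sqrt_le_sqrt hsq
  · exact norm_nonneg _


lemma ψ_differentiableOn : DifferentiableOn ℂ (ψ d t z) (Dset d t z) := by
  apply DifferentiableOn.div
  · exact ((φ_differentiable d t).sub_const _).differentiableOn
  · exact ((φ_differentiable d t).sub_const _).differentiableOn
  · exact fun ζ hζ => hζ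

lemma ψ_hasDerivAt : HasDerivAt (ψ d t z)
    (((↑(π/d)) * Complex.I * φ d t z) / (φ d t z - starRingEnd ℂ (φ d t z))) z := by
  have hden : φ d t z - starRingEnd ℂ (φ d t z) ≠ 0 :=
    mem_Dset hd hz1 hz2 (φ_im_nonneg hd hz1.le (by linarith))
  have h := ((φ_hasDeriv d t z).sub_const (φ d t z)).div
    ((φ_hasDeriv d t z).sub_const (starRingEnd ℂ (φ d t z))) hden
  refine h.congr_deriv ?_
  rw [sub_self, zero_mul, sub_zero, sq, mul_div_mul_right _ _ hden]

lemma ψ_deriv_abs_lb : π/(2*d) ≤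
    ‖((↑(π/d)) * Complex.I * φ d t z) / (φ d t z - starRingEnd ℂ (φ d t z))‖ := by
  have haim : 0 < (φ d t z).im := φ_im_pos hd hz1 hz2
  have haφ : 0 < ‖φ d t z‖ := by
    apply norm_pos_iff.mpr
    unfold φ; exact Complex.exp_ne_zero _
  have hub : (φ d t z).im ≤ ‖φ d t z‖ := Complex.im_le_norm _
  rw [norm_div, norm_mul, norm_mul, Complex.norm_real, Real.norm_eq_abs, Complex.norm_I, mul_one,
    Complex.sub_conj, norm_mul, Complex.norm_real, Real.norm_eq_abs, Complex.norm_I, mul_one]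
  have hπd : 0 < π/d := by positivity
  rw [abs_of_pos hπd, abs_of_pos (by linarith : (0:ℝ) < 2 * (φ d t z).im)]
  have hkey : π/(2*d) = (π/d) * ‖φ d t z‖ / (2 * ‖φ d t z‖) := by
    field_simp
  rw [hkey]
  rw [div_le_div_iff_of_pos_left (by positivity) (by positivity) (by linarith)]
  linarith

end Strip
end SGF


set_option maxHeartbeats 2000000 in
/-- If a bounded plane domain is contained in a strip of width `d` then the diagonal
regular part of its Dirichlet Green function is bounded above by `(1/2π) log (2d/π)`. -/
theorem regular_part_le_of_strip (Ω : Set Pt)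
    (hΩo : IsOpen Ω) (hΩc : IsConnected Ω) (hΩb : Bornology.IsBounded Ω)
    (d : ℝ) (hd : 0 < d)
    (hstrip : ∃ v : Pt, ‖v‖ = 1 ∧ ∃ t : ℝ, Ω ⊆ {x : Pt | t < inner ℝ v x ∧ (inner ℝ v x : ℝ) < t + d})
    (G : Pt → Pt → ℝ) (γ : Pt → ℝ)
    (hGsm : ∀ x ∈ Ω, ContDiffOn ℝ 2 (G x) (Ω \ {x}))
    (hGharm : ∀ x ∈ Ω, ∀ y ∈ Ω \ {x}, lap (G x) y = 0)
    (hGcont : ∀ x ∈ Ω, ContinuousOn (G x) (closure Ω \ {x}))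
    (hGbd : ∀ x ∈ Ω, ∀ y ∈ frontier Ω, G x y = 0)
    (hGpos : ∀ x ∈ Ω, ∀ y ∈ Ω \ {x}, 0 < G x y)
    (hγ : ∀ x ∈ Ω, Tendsto (fun y => G x y - (1/(2*π)) * Real.log (1/‖y - x‖))
      (nhdsWithin x {x}ᶜ) (nhds (γ x))) :
    ∀ x ∈ Ω, γ x ≤ (1/(2*π)) * Real.log (2*d/π) := by
  obtain ⟨v, hv1, t, hsub⟩ := hstrip
  intro x hx
  -- the rotated complex coordinate
  set w : Pt := EuclideanSpace.single 1 (v 0) - EuclideanSpace.single 0 (v 1) with hwdef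
  set L : Pt →L[ℝ] ℂ :=
    Complex.ofRealCLM.comp (innerSL ℝ v) + (innerSL ℝ w).smulRight Complex.I with hLdef
  have hLapp : ∀ y : Pt, L y = ((inner ℝ v y : ℝ) : ℂ) + ((inner ℝ w y : ℝ) : ℂ) * Complex.I := by
    intro y
    simp [hLdef, Complex.real_smul]
  have hLre : ∀ y : Pt, (L y).re = (inner ℝ v y : ℝ) := by
    intro y; rw [hLapp]; simp
  have hLim : ∀ y : Pt, (L y).im = (inner ℝ w y : ℝ) := by
    intro y; rw [hLapp]; simp
  have hinnerv : ∀ y : Pt, (inner ℝ v y : ℝ) = v 0 * y 0 + v 1 * y 1 := by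
    intro y
    rw [PiLp.inner_apply, Fin.sum_univ_two]
    simp; ring

  have hinnerw : ∀ y : Pt, (inner ℝ w y : ℝ) = v 0 * y 1 - v 1 * y 0 := by
    intro y
    rw [hwdef, inner_sub_left, EuclideanSpace.inner_single_left,
      EuclideanSpace.inner_single_left]
    simp
  have hvnorm : v 0 ^ 2 + v 1 ^ 2 = 1 := by
    have h := real_inner_self_eq_norm_sq v
    rw [hv1, one_pow, hinnerv] at h
    nlinarith [h]
  have habs : ∀ y : Pt, ‖L y‖ = ‖y‖ := by
    intro y
    have hy : (inner ℝ y y : ℝ) = y 0 * y 0 + y 1 * y 1 := by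
      rw [PiLp.inner_apply, Fin.sum_univ_two]; simp; ring

    have hn : ‖y‖ ^ 2 = y 0 ^ 2 + y 1 ^ 2 := by
      rw [← real_inner_self_eq_norm_sq, hy]; ring
    have hsq : ‖L y‖ ^ 2 = ‖y‖ ^ 2 := by
      rw [Complex.sq_norm, Complex.normSq_apply, hLre, hLim, hinnerv, hinnerw, hn]
      nlinarith [hvnorm]
    have h1 : 0 ≤ ‖L y‖ := norm_nonneg _
    have h2 : (0:ℝ) ≤ ‖y‖ := norm_nonneg y
    have := congrArg Real.sqrt hsq
    rwa [Real.sqrt_sq h1, Real.sqrt_sq h2] at this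
  have hLinj : Function.Injective L := by
    intro a b hab
    have h0 : ‖a - b‖ = 0 := by
      rw [← habs, map_sub, hab, sub_self, norm_zero]
    rwa [norm_eq_zero, sub_eq_zero] at h0
  have hLe : (L (EuclideanSpace.single 0 1))^2 + (L (EuclideanSpace.single 1 1))^2 = 0 := by
    have hs00 : (EuclideanSpace.single (0 : Fin 2) (1:ℝ)) 0 = 1 := by
      simp [EuclideanSpace.single_apply]
    have hs01 : (EuclideanSpace.single (0 : Fin 2) (1:ℝ)) 1 = 0 := by
      simp [EuclideanSpace.single_apply]
    have hs10 : (EuclideanSpace.single (1 : Fin 2) (1:ℝ)) 0 = 0 := by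
      simp [EuclideanSpace.single_apply]
    have hs11 : (EuclideanSpace.single (1 : Fin 2) (1:ℝ)) 1 = 1 := by
      simp [EuclideanSpace.single_apply]
    rw [hLapp, hLapp, hinnerv, hinnerv, hinnerw, hinnerw, hs00, hs01, hs10, hs11]
    rw [Complex.ext_iff]
    constructor
    · simp only [Complex.add_re, Complex.add_im, Complex.mul_re, Complex.mul_im,
        Complex.I_re, Complex.I_im, Complex.ofReal_re, Complex.ofReal_im,
        Complex.zero_re, Complex.zero_im, pow_two]
      ring
    · simp only [Complex.add_re, Complex.add_im, Complex.mul_re, Complex.mul_im,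
        Complex.I_re, Complex.I_im, Complex.ofReal_re, Complex.ofReal_im,
        Complex.zero_re, Complex.zero_im, pow_two]
      ring
  -- pole coordinate and strip bounds
  set z : ℂ := L x with hzdef
  have hz1 : t < z.re := by rw [hzdef, hLre]; exact (hsub hx).1
  have hz2 : z.re < t + d := by rw [hzdef, hLre]; exact (hsub hx).2
  have hstrip_cl : ∀ y ∈ closure Ω, t ≤ (L y).re ∧ (L y).re ≤ t + d := by
    have hclosed : IsClosed {y : Pt | t ≤ (L y).re ∧ (L y).re ≤ t + d} := by
      have hpre : {y : Pt | t ≤ (L y).re ∧ (L y).re ≤ t + d}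
          = (fun y : Pt => (L y).re) ⁻¹' (Set.Icc t (t+d)) := rfl
      rw [hpre]
      exact IsClosed.preimage (Complex.continuous_re.comp L.continuous) isClosed_Icc
    have hsub' : Ω ⊆ {y : Pt | t ≤ (L y).re ∧ (L y).re ≤ t + d} := by
      intro y hy
      exact ⟨by rw [hLre]; exact le_of_lt (hsub hy).1,
        by rw [hLre]; exact le_of_lt (hsub hy).2⟩
    exact fun y hy => closure_minimal hsub' hclosed hy
  have hLD : ∀ y ∈ closure Ω, L y ∈ SGF.Dset d t z :=
    fun y hy => SGF.mem_Dset hd hz1 hz2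
      (SGF.φ_im_nonneg hd (hstrip_cl y hy).1 (hstrip_cl y hy).2)
  have hψne : ∀ y ∈ closure Ω, y ≠ x → SGF.ψ d t z (L y) ≠ 0 := by
    intro y hy hne
    exact SGF.ψ_ne_zero hd hz1 hz2 (hstrip_cl y hy).1 (hstrip_cl y hy).2
      (fun h => hne (hLinj (by rw [hzdef] at h; exact h)))
  -- the log-modulus comparison function
  set ℓ : Pt → ℝ := fun y => Real.log (‖SGF.ψ d t z (L y)‖) with hℓdef
  have hpkg : ∀ p : Pt, L p ∈ SGF.Dset d t z → SGF.ψ d t z (L p) ≠ 0 →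
      ContDiffAt ℝ 2 ℓ p ∧ lap ℓ p = 0 := by
    intro p hpD hpne
    set c : ℂ := ((‖SGF.ψ d t z (L p)‖ : ℝ) : ℂ) / SGF.ψ d t z (L p) with hcdef
    have hcabs : ‖c‖ = 1 := by
      rw [hcdef, norm_div, Complex.norm_real, norm_norm,
      div_self (norm_ne_zero_iff.mpr hpne)]
    have hFeq : ℓ = fun q => (Complex.log (c * SGF.ψ d t z (L q))).re := by
      funext q
      rw [hℓdef, Complex.log_re, norm_mul, hcabs, one_mul]
    have hψcont : ContinuousOn (SGF.ψ d t z) (SGF.Dset d t z) :=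
      (SGF.ψ_differentiableOn hd hz1 hz2).continuousOn
    have hsopen : IsOpen (SGF.Dset d t z ∩
        (fun ζ => c * SGF.ψ d t z ζ) ⁻¹' Complex.slitPlane) :=
      ContinuousOn.isOpen_inter_preimage (continuousOn_const.mul hψcont)
        (SGF.Dset_open d t z) Complex.isOpen_slitPlane
    have hFdiff : DifferentiableOn ℂ (fun ζ => Complex.log (c * SGF.ψ d t z ζ))
        (SGF.Dset d t z ∩ (fun ζ => c * SGF.ψ d t z ζ) ⁻¹' Complex.slitPlane) := by
      intro ζ hζ
      have h1 : DifferentiableAt ℂ (fun ζ => c * SGF.ψ d t z ζ) ζ :=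
        ((SGF.ψ_differentiableOn hd hz1 hz2).differentiableAt
          ((SGF.Dset_open d t z).mem_nhds hζ.1)).const_mul c
      exact (h1.clog hζ.2).differentiableWithinAt
    have hps : L p ∈ SGF.Dset d t z ∩
        (fun ζ => c * SGF.ψ d t z ζ) ⁻¹' Complex.slitPlane := by
      refine ⟨hpD, ?_⟩
      have hcc : c * SGF.ψ d t z (L p) = ((‖SGF.ψ d t z (L p)‖ : ℝ) : ℂ) := by
        rw [hcdef, div_mul_cancel₀ _ hpne]
      show c * SGF.ψ d t z (L p) ∈ Complex.slitPlane
      rw [hcc]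
      exact Complex.mem_slitPlane_iff.mpr (Or.inl (by simpa using norm_pos_iff.mpr hpne))
    have hres := lap_re_holo L hLe hsopen hFdiff hps
    rw [hFeq]
    exact hres
  -- derivative of ψ at the pole
  have hψ' := SGF.ψ_hasDerivAt hd hz1 hz2
  set c1c : ℂ := ((↑(π/d)) * Complex.I * SGF.φ d t z)
      / (SGF.φ d t z - starRingEnd ℂ (SGF.φ d t z)) with hc1def
  have hc1lb : π/(2*d) ≤ ‖c1c‖ := SGF.ψ_deriv_abs_lb hd hz1 hz2
  have hc1pos : 0 < ‖c1c‖ := lt_of_lt_of_le (by positivity) hc1lb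
  haveI : (𝓝[≠] (x:Pt)).NeBot := Module.punctured_nhds_neBot ℝ Pt x
  have hLtend : Tendsto (fun y : Pt => L y) (𝓝[≠] x) (𝓝[≠] z) := by
    rw [nhdsWithin, nhdsWithin]
    apply Tendsto.inf
    · rw [hzdef]; exact L.continuous.continuousAt
    · apply tendsto_principal_principal.mpr
      intro y hy
      simp only [Set.mem_compl_iff, Set.mem_singleton_iff] at hy ⊢
      intro h; exact hy (hLinj (by rw [hzdef] at h; exact h))
  have hslope : Tendsto (fun y : Pt => ‖SGF.ψ d t z (L y)‖ / ‖y - x‖)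
      (𝓝[≠] x) (𝓝 (‖c1c‖)) := by
    have h1 : Tendsto (slope (SGF.ψ d t z) z) (𝓝[≠] z) (𝓝 c1c) :=
      hasDerivAt_iff_tendsto_slope.mp hψ'
    have h2 := (continuous_norm.tendsto c1c).comp (h1.comp hLtend)
    apply h2.congr'
    filter_upwards [self_mem_nhdsWithin] with y hy
    have hyx : y ≠ x := hy
    show ‖slope (SGF.ψ d t z) z (L y)‖ = ‖SGF.ψ d t z (L y)‖ / ‖y - x‖
    rw [slope_def_field, SGF.ψ_self hd hz1 hz2, sub_zero, norm_div]
    congr 1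
    rw [show L y - z = L (y - x) from by rw [hzdef, map_sub], habs]
  have hlogslope : Tendsto (fun y : Pt =>
      Real.log (‖SGF.ψ d t z (L y)‖ / ‖y - x‖)) (𝓝[≠] x)
      (𝓝 (Real.log (‖c1c‖))) :=
    ((Real.continuousAt_log (ne_of_gt hc1pos)).tendsto).comp hslope
  have hevΩ : ∀ᶠ y in 𝓝[≠] (x:Pt), y ∈ Ω ∧ y ≠ x := by
    filter_upwards [mem_nhdsWithin_of_mem_nhds (hΩo.mem_nhds hx), self_mem_nhdsWithin]
      with y h1 h2
    exact ⟨h1, h2⟩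
  have hπ0 : (π:ℝ) ≠ 0 := Real.pi_ne_zero
  have hc2π : (2*π) * ((1:ℝ)/(2*π)) = 1 := by field_simp
  -- core estimate via the maximum principle
  have core : ∀ δ, 0 < δ → ∀ y₀ ∈ Ω, y₀ ≠ x →
      2*π*(G x y₀) + (1+δ) * ℓ y₀ ≤ 0 := by
    intro δ hδ
    set uδ : Pt → ℝ := fun y => 2*π*(G x y) + (1+δ) * ℓ y with hudef
    have hbot : Tendsto uδ (𝓝[≠] x) atBot := by
      have hrw : ∀ᶠ y in 𝓝[≠] (x:Pt),
          (2*π) * (G x y - (1/(2*π)) * Real.log (1/‖y - x‖))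
          + (1+δ) * Real.log (‖SGF.ψ d t z (L y)‖ / ‖y - x‖)
          + δ * Real.log ‖y - x‖ = uδ y := by
        filter_upwards [hevΩ] with y hy
        obtain ⟨hyΩ, hyx⟩ := hy
        have hr : (0:ℝ) < ‖y - x‖ := norm_sub_pos_iff.mpr hyx
        have ha : ‖SGF.ψ d t z (L y)‖ ≠ 0 :=
          norm_ne_zero_iff.mpr (hψne y (subset_closure hyΩ) hyx)
        rw [Real.log_div ha (ne_of_gt hr), Real.log_div one_ne_zero (ne_of_gt hr),
          Real.log_one]
        simp only [hudef, hℓdef]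
        linear_combination Real.log ‖y - x‖ * hc2π
      have hT1 : Tendsto (fun y : Pt =>
          (2*π) * (G x y - (1/(2*π)) * Real.log (1/‖y - x‖))) (𝓝[≠] x)
          (𝓝 ((2*π) * γ x)) := (hγ x hx).const_mul _
      have hT2 : Tendsto (fun y : Pt =>
          (1+δ) * Real.log (‖SGF.ψ d t z (L y)‖ / ‖y - x‖)) (𝓝[≠] x)
          (𝓝 ((1+δ) * Real.log (‖c1c‖))) := hlogslope.const_mul _
      have hnorm : Tendsto (fun y : Pt => ‖y - x‖) (𝓝[≠] x) (𝓝[>] (0:ℝ)) := by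
        rw [tendsto_nhdsWithin_iff]
        constructor
        · have hcn : Tendsto (fun y : Pt => ‖y - x‖) (𝓝 x) (𝓝 ‖x - x‖) :=
            ((continuous_id.sub continuous_const).norm).continuousAt
          have := hcn.mono_left (nhdsWithin_le_nhds (s := ({x}ᶜ : Set Pt)))
          simpa using this
        · filter_upwards [self_mem_nhdsWithin] with y hy
          exact norm_sub_pos_iff.mpr hy
      have hT3 : Tendsto (fun y : Pt => δ * Real.log ‖y - x‖) (𝓝[≠] x) atBot :=
        (Real.tendsto_log_nhdsGT_zero.comp hnorm).const_mul_atBot hδ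
      exact (((hT1.add hT2).add_atBot hT3).congr' hrw)
    obtain ⟨ε, hε, hball⟩ : ∃ ε > 0, ∀ y, dist y x < ε → y ≠ x → uδ y ≤ 0 := by
      have hev0 : {y : Pt | uδ y ≤ 0} ∈ 𝓝[≠] (x:Pt) :=
        hbot.eventually (eventually_le_atBot 0)
      rcases Metric.mem_nhdsWithin_iff.mp hev0 with ⟨ε, hε, hsub'⟩
      exact ⟨ε, hε, fun y h1 h2 => hsub' ⟨Metric.mem_ball.mpr h1, h2⟩⟩
    intro y₀ hy₀ hy₀x
    have hdist : 0 < dist y₀ x := dist_pos.mpr hy₀x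
    set r : ℝ := min (ε/2) (dist y₀ x / 2) with hrdef
    have hr0 : 0 < r := lt_min (by positivity) (by positivity)
    have hrε : r < ε := lt_of_le_of_lt (min_le_left _ _) (by linarith)
    have hrd : r < dist y₀ x := lt_of_le_of_lt (min_le_right _ _) (by linarith)
    set U : Set Pt := Ω \ Metric.closedBall x r with hUdef
    have hUo : IsOpen U := hΩo.sdiff Metric.isClosed_closedBall
    have hUb : Bornology.IsBounded U := hΩb.subset Set.diff_subset
    have hclU : closure U ⊆ closure Ω \ Metric.ball x r := by
      intro q hq
      refine ⟨closure_mono Set.diff_subset hq, ?_⟩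
      have hsub2 : U ⊆ (Metric.ball x r)ᶜ :=
        fun p hp hb => hp.2 (Metric.ball_subset_closedBall hb)
      exact closure_minimal hsub2 Metric.isOpen_ball.isClosed_compl hq
    have hsubx : closure Ω \ Metric.ball x r ⊆ closure Ω \ {x} := by
      intro q hq
      refine ⟨hq.1, ?_⟩
      intro h
      rw [Set.mem_singleton_iff] at h
      subst h
      exact hq.2 (Metric.mem_ball_self hr0)
    have hScomp : closure U ⊆ closure Ω \ {x} := fun q hq => hsubx (hclU hq)
    have hUsm : ∀ p ∈ U, p ∈ Ω ∧ p ≠ x := by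
      intro p hp
      refine ⟨hp.1, fun h => ?_⟩
      subst h
      exact hp.2 (Metric.mem_closedBall_self hr0.le)
    have hcU : ContinuousOn uδ (closure U) := by
      apply ContinuousOn.add
      · exact continuousOn_const.mul ((hGcont x hx).mono hScomp)
      · apply continuousOn_const.mul
        intro q hq
        have hq' := hScomp hq
        have hqx : q ≠ x := hq'.2
        have hψat : ContinuousAt (SGF.ψ d t z) (L q) :=
          (SGF.ψ_differentiableOn hd hz1 hz2).continuousOn.continuousAt
            ((SGF.Dset_open d t z).mem_nhds (hLD q hq'.1))
        have h2 : ContinuousAt ℓ q := by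
          rw [hℓdef]
          have hca : ContinuousAt (fun q : Pt => ‖SGF.ψ d t z (L q)‖) q :=
            continuous_norm.continuousAt.comp (hψat.comp L.continuous.continuousAt)
          exact ContinuousAt.comp (x := q) (Real.continuousAt_log (norm_ne_zero_iff.mpr (hψne q hq'.1 hqx) : ‖SGF.ψ d t z (L q)‖ ≠ 0)) hca
        exact h2.continuousWithinAt
    have hsmU : ∀ p ∈ U, ContDiffAt ℝ 2 uδ p := by
      intro p hp
      obtain ⟨hpΩ, hpx⟩ := hUsm p hp
      have hmem : p ∈ Ω \ ({x} : Set Pt) := ⟨hpΩ, by simpa using hpx⟩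
      have hG2 : ContDiffAt ℝ 2 (G x) p :=
        (hGsm x hx).contDiffAt ((hΩo.sdiff isClosed_singleton).mem_nhds hmem)
      have hℓ2 : ContDiffAt ℝ 2 ℓ p :=
        (hpkg p (hLD p (subset_closure hpΩ)) (hψne p (subset_closure hpΩ) hpx)).1
      exact (contDiffAt_const.mul hG2).add (contDiffAt_const.mul hℓ2)
    have hlapU : ∀ p ∈ U, lap uδ p = 0 := by
      intro p hp
      obtain ⟨hpΩ, hpx⟩ := hUsm p hp
      have hmem : p ∈ Ω \ ({x} : Set Pt) := ⟨hpΩ, by simpa using hpx⟩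
      have hℓOn : ContDiffOn ℝ 2 ℓ (Ω \ ({x} : Set Pt)) := by
        intro q hq
        exact ((hpkg q (hLD q (subset_closure hq.1))
          (hψne q (subset_closure hq.1) (by simpa using hq.2))).1).contDiffWithinAt
      have := lap_comb (hΩo.sdiff isClosed_singleton) hmem (hGsm x hx) hℓOn (2*π) (1+δ)
      rw [hudef]
      rw [this, hGharm x hx p hmem,
        (hpkg p (hLD p (subset_closure hpΩ)) (hψne p (subset_closure hpΩ) hpx)).2]
      ring
    have hfrU : ∀ p ∈ frontier U, uδ p ≤ 0 := by
      intro p hp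
      rw [hUo.frontier_eq] at hp
      obtain ⟨hp1, hp2⟩ := hp
      have hp1' := hclU hp1
      by_cases hpΩ : p ∈ Ω
      · have hpc : p ∈ Metric.closedBall x r := by
          by_contra hc
          exact hp2 ⟨hpΩ, hc⟩
        have hdp : dist p x < ε := lt_of_le_of_lt (Metric.mem_closedBall.mp hpc) hrε
        have hpx : p ≠ x := by
          intro h
          subst h
          exact hp1'.2 (Metric.mem_ball_self hr0)
        exact hball p hdp hpx
      · have hpf : p ∈ frontier Ω := by
          rw [hΩo.frontier_eq]; exact ⟨hp1'.1, hpΩ⟩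
        have hG0 : G x p = 0 := hGbd x hx p hpf
        have hl0 : ℓ p ≤ 0 := by
          rw [hℓdef]
          exact Real.log_nonpos (norm_nonneg _)
            (SGF.ψ_abs_le_one hd hz1 hz2
              (SGF.φ_im_nonneg hd (hstrip_cl p hp1'.1).1 (hstrip_cl p hp1'.1).2))
        have hup : uδ p = (1+δ) * ℓ p := by
          rw [hudef]; simp only [hG0]; ring
        rw [hup]
        nlinarith [hl0, hδ]
    have hy₀U : y₀ ∈ U := by
      refine ⟨hy₀, fun hcb => ?_⟩
      exact (not_lt.mpr (Metric.mem_closedBall.mp hcb)) hrd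
    have := max_principle hUo hUb hcU hsmU hlapU hfrU y₀ hy₀U
    rw [hudef] at this
    exact this
  -- let δ → 0
  have hv0 : ∀ y ∈ Ω, y ≠ x → 2*π*(G x y) + ℓ y ≤ 0 := by
    intro y hy hyx
    rcases le_or_gt 0 (ℓ y) with hb | hb
    · have h1 := core 1 one_pos y hy hyx
      linarith
    · by_contra ha
      push_neg at ha
      have hδp : 0 < (2*π*(G x y) + ℓ y)/(2*(-(ℓ y))) := by
        apply div_pos ha
        linarith
      have h2 := core _ hδp y hy hyx
      have hlne : ℓ y ≠ 0 := ne_of_lt hb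
      have hkey : (2*π*(G x y) + ℓ y)/(2*(-(ℓ y))) * ℓ y = -(2*π*(G x y) + ℓ y)/2 := by
        field_simp
      nlinarith [h2, hkey]
  -- pass to the limit
  have hfin : ∀ᶠ y in 𝓝[≠] (x:Pt),
      (2*π) * (G x y - (1/(2*π)) * Real.log (1/‖y - x‖))
        ≤ -Real.log (‖SGF.ψ d t z (L y)‖ / ‖y - x‖) := by
    filter_upwards [hevΩ] with y hy
    obtain ⟨hyΩ, hyx⟩ := hy
    have hr : (0:ℝ) < ‖y - x‖ := norm_sub_pos_iff.mpr hyx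
    have ha : ‖SGF.ψ d t z (L y)‖ ≠ 0 :=
      norm_ne_zero_iff.mpr (hψne y (subset_closure hyΩ) hyx)
    have h0 := hv0 y hyΩ hyx
    rw [Real.log_div ha (ne_of_gt hr), Real.log_div one_ne_zero (ne_of_gt hr), Real.log_one]
    have hexp : (2*π) * (G x y - (1/(2*π)) * (0 - Real.log ‖y - x‖))
        = 2*π*(G x y) + Real.log ‖y - x‖ := by
      field_simp
      ring
    rw [hexp]
    simp only [hℓdef] at h0
    linarith
  have hlim1 : Tendsto (fun y : Pt =>
      (2*π) * (G x y - (1/(2*π)) * Real.log (1/‖y - x‖))) (𝓝[≠] x)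
      (𝓝 ((2*π) * γ x)) := (hγ x hx).const_mul _
  have hlim2 : Tendsto (fun y : Pt =>
      -Real.log (‖SGF.ψ d t z (L y)‖ / ‖y - x‖)) (𝓝[≠] x)
      (𝓝 (-Real.log (‖c1c‖))) := hlogslope.neg
  have h2πγ : (2*π) * γ x ≤ -Real.log (‖c1c‖) :=
    le_of_tendsto_of_tendsto hlim1 hlim2 hfin
  have hlogle : Real.log (π/(2*d)) ≤ Real.log (‖c1c‖) :=
    Real.log_le_log (by positivity) hc1lb
  have hloginv : -Real.log (π/(2*d)) = Real.log (2*d/π) := by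
    rw [← Real.log_inv]
    congr 1
    rw [inv_div]
  have hfinal : (2*π) * γ x ≤ Real.log (2*d/π) := by
    rw [← hloginv]
    linarith
  have h2π : (0:ℝ) < 2*π := by positivity
  rw [show (1:ℝ)/(2*π) * Real.log (2*d/π) = Real.log (2*d/π) / (2*π) from by ring,
    le_div_iff₀ h2π]
  linarith
end
end
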